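/- Consider a continuous convex smooth game in which every player i runs OptDA with a regularizer h_i on X_i and the adaptive learning rate. If the game is variationally stable, then for every player i the sum Σ_{t=1}^{∞} ‖g_t^i − g_{t−1}^i‖² is finite; equivalently, the learning rate sequence (η_t^i)_{t≥1} converges to a finite limit as t → ∞. -/

import Mathlib

/-!
Each player's OptDA run obeys a one-round energy inequality with `daEnergy` as potential: the
energy drops by at least
`(‖X_{t+1/2} - X_t‖² + ‖X_{t+1} - X_{t+1/2}‖²) / 4 + ⟪g_t, X_{t+1/2} - x*⟫`,
up to the growth of `η_t` and the optimism error `‖g_t - g_{t-1}‖² / η_t`. Summed over players,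
variational stability discards the inner products, so the total squared movement
`A_T = sumSqMovement W Z T` is at most `∑ᵢ Cᵢ ηᵢ_T` plus the accumulated optimism errors. Since
the feedback is Lipschitz in the played profile, `‖g_t - g_{t-1}‖²` is controlled by the movement
around round `t`; hence `ηᵢ_T ≲ 1 + √A_T`, and each player's error sum is either bounded or, once
`η` is large, a small multiple of `A_T`. So `A_T ≤ α + β √A_T`, `A_T` is bounded, and with it
every increment sum.
-/

open scoped RealInnerProductSpace
open Filter Finset Topology

noncomputable section

/-- Bregman divergence of a regularizer `h` with gradient map `Gh`. -/
def breg {F : Type*} [NormedAddCommGroup F] [InnerProductSpace ℝ F]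
    (h : F → ℝ) (Gh : F → F) (p x : F) : ℝ :=
  h p - h x - ⟪Gh x, p - x⟫

/-- `h` is a regularizer on `X`: a convex differentiable function with gradient map `Gh`
that is `1`-strongly convex on `X`. -/
structure IsRegularizer {F : Type*} [NormedAddCommGroup F] [InnerProductSpace ℝ F]
    (X : Set F) (h : F → ℝ) (Gh : F → F) : Prop where
  convex : ConvexOn ℝ Set.univ h
  grad : ∀ x : F, HasFDerivAt h (innerSL ℝ (Gh x)) x
  strong : StrongConvexOn X 1 h

/-- The adaptive learning rate `η_t = √(1 + ∑_{s=1}^{t-1} ‖g_s - g_{s-1}‖²)`. -/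
def adaEta {F : Type*} [NormedAddCommGroup F] [InnerProductSpace ℝ F]
    (g : ℕ → F) (t : ℕ) : ℝ :=
  Real.sqrt (1 + ∑ s ∈ Finset.Ico 1 t, ‖g s - g (s - 1)‖ ^ 2)

/-- OptDA iterates: `Z t` is the base state `X_t` and `W t` is the played action `X_{t+1/2}`,
for feedback `g` (with `g 0 = 0`) and positive nondecreasing learning rates `η`. -/
structure IsOptDA {F : Type*} [NormedAddCommGroup F] [InnerProductSpace ℝ F]
    (X : Set F) (h : F → ℝ) (Gh : F → F)
    (η : ℕ → ℝ) (g : ℕ → F) (Z W : ℕ → F) : Prop where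
  g_zero : g 0 = 0
  eta_pos : ∀ t : ℕ, 1 ≤ t → 0 < η t
  eta_mono : ∀ t : ℕ, 1 ≤ t → η t ≤ η (t + 1)
  base_mem : ∀ t : ℕ, 1 ≤ t → Z t ∈ X
  lead_mem : ∀ t : ℕ, 1 ≤ t → W t ∈ X
  base_min : ∀ t : ℕ, 1 ≤ t → ∀ p ∈ X,
    ⟪∑ s ∈ Finset.Ico 1 t, g s, Z t⟫ + η t * h (Z t)
      ≤ ⟪∑ s ∈ Finset.Ico 1 t, g s, p⟫ + η t * h p
  lead_min : ∀ t : ℕ, 1 ≤ t → ∀ p ∈ X,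
    ⟪g (t - 1), W t⟫ + η t * breg h Gh (W t) (Z t)
      ≤ ⟪g (t - 1), p⟫ + η t * breg h Gh p (Z t)

variable {ι : Type*} [Fintype ι] [DecidableEq ι] {E : ι → Type*}
  [∀ i, NormedAddCommGroup (E i)] [∀ i, InnerProductSpace ℝ (E i)]
  [∀ i, FiniteDimensional ℝ (E i)]

/-- The profile of actions played at round `t`, as a point of the joint space `PiLp 2 E`
(whose norm is the product norm `‖x‖ = √(∑ j ‖x j‖²)`). -/
def profileAt (W : ∀ i, ℕ → E i) (t : ℕ) : PiLp 2 E := WithLp.toLp 2 fun j => W j t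

/-- A continuous convex smooth game: each player `i` has a nonempty closed convex action set
`X i`, a continuous loss `L i` convex in the `i`-th variable, and a Lipschitz continuous map
`V i` selecting subgradients of `L i` in the `i`-th variable on the joint action space. -/
structure ConvexGame (X : ∀ i, Set (E i)) (L : ι → PiLp 2 E → ℝ)
    (V : ∀ i, PiLp 2 E → E i) : Prop where
  nonempty : ∀ i, (X i).Nonempty
  closed : ∀ i, IsClosed (X i)
  convexSet : ∀ i, Convex ℝ (X i)
  contLoss : ∀ i, Continuous (L i)
  convexLoss : ∀ i, ∀ x : PiLp 2 E,
    ConvexOn ℝ Set.univ fun p : E i => L i (WithLp.toLp 2 (Function.update x i p))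
  lipschitzV : ∀ i, ∃ K : NNReal, LipschitzWith K (V i)
  subgrad : ∀ i, ∀ x : PiLp 2 E, (∀ j, x j ∈ X j) → ∀ p ∈ X i,
    L i x + ⟪V i x, p - x i⟫ ≤ L i (WithLp.toLp 2 (Function.update x i p))

/-- `x` is a Nash equilibrium of the game. -/
def IsNashEq (X : ∀ i, Set (E i)) (L : ι → PiLp 2 E → ℝ) (x : PiLp 2 E) : Prop :=
  (∀ i, x i ∈ X i) ∧ ∀ i, ∀ p ∈ X i, L i x ≤ L i (WithLp.toLp 2 (Function.update x i p))

/-- The game is variationally stable. -/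
def VarStable (X : ∀ i, Set (E i)) (L : ι → PiLp 2 E → ℝ)
    (V : ∀ i, PiLp 2 E → E i) : Prop :=
  (∃ xs : PiLp 2 E, IsNashEq X L xs) ∧
    ∀ x : PiLp 2 E, (∀ j, x j ∈ X j) → ∀ xs : PiLp 2 E, IsNashEq X L xs →
      0 ≤ ∑ i, ⟪V i x, x i - xs i⟫

/-- Every player `i` runs OptDA with regularizer `h i` and the adaptive learning rate,
the feedback being the individual gradient `V i` evaluated at the realized profile. -/
structure AllOptDA (X : ∀ i, Set (E i)) (V : ∀ i, PiLp 2 E → E i)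
    (h : ∀ i, E i → ℝ) (Gh : ∀ i, E i → E i)
    (η : ∀ i, ℕ → ℝ) (g : ∀ i, ℕ → E i) (Z W : ∀ i, ℕ → E i) : Prop where
  reg : ∀ i, IsRegularizer (X i) (h i) (Gh i)
  g_zero : ∀ i, g i 0 = 0
  feedback : ∀ i, ∀ t : ℕ, 1 ≤ t → g i t = V i (profileAt W t)
  rate : ∀ i t, η i t = adaEta (g i) t
  run : ∀ i, IsOptDA (X i) (h i) (Gh i) (η i) (g i) (Z i) (W i)

section FirstOrder
variable {F : Type*} [NormedAddCommGroup F] [NormedSpace ℝ F] {X : Set F} {f : F → ℝ}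
  {f' : F →L[ℝ] ℝ} {x p : F}

theorem ConvexOn.add_apply_sub_le (hf : ConvexOn ℝ X f) (hx : x ∈ X) (hp : p ∈ X)
    (hd : HasFDerivAt f f' x) : f x + f' (p - x) ≤ f p := by
  let γ : ℝ →ᵃ[ℝ] F := AffineMap.lineMap x p
  have hγ : HasDerivAt (f ∘ γ) (f' (p - x)) 0 := by
    refine HasFDerivAt.comp_hasDerivAt (0 : ℝ) ?_ AffineMap.hasDerivAt_lineMap
    simpa [γ] using hd
  have h0 : (0 : ℝ) ∈ γ ⁻¹' X := by simpa [γ] using hx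
  have h1 : (1 : ℝ) ∈ γ ⁻¹' X := by simpa [γ] using hp
  have := (hf.comp_affineMap γ).le_slope_of_hasDerivAt h0 h1 zero_lt_one hγ
  simp [γ, slope_def_field] at this
  rw [map_sub]
  linarith

theorem IsMinOn.hasFDerivAt_apply_sub_nonneg (hmin : IsMinOn f X x) (hX : Convex ℝ X)
    (hx : x ∈ X) (hp : p ∈ X) (hd : HasFDerivAt f f' x) : 0 ≤ f' (p - x) :=
  hmin.localize.hasFDerivWithinAt_nonneg hd.hasFDerivWithinAt
    (sub_mem_posTangentConeAt_of_segment_subset (hX.segment_subset hx hp))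

end FirstOrder

section Bregman
variable {F : Type*} [NormedAddCommGroup F] [InnerProductSpace ℝ F] {X : Set F}
  {h : F → ℝ} {Gh : F → F}

theorem inner_sub_sub_eq_breg (h : F → ℝ) (Gh : F → F) (x y z : F) :
    ⟪Gh y - Gh x, z - y⟫ = breg h Gh z x - breg h Gh z y - breg h Gh y x := by
  simp only [breg, inner_sub_left, inner_sub_right]
  ring

theorem hasFDerivAt_breg_left (hgrad : ∀ x, HasFDerivAt h (innerSL ℝ (Gh x)) x) (x p : F) :
    HasFDerivAt (fun q => breg h Gh q x) (innerSL ℝ (Gh p) - innerSL ℝ (Gh x)) p := by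
  have := ((hgrad p).sub_const (h x)).sub
    (((innerSL ℝ (Gh x)).hasFDerivAt).sub_const ⟪Gh x, x⟫)
  simp only [breg, inner_sub_right]
  exact this

theorem IsRegularizer.half_sq_norm_le_breg (hreg : IsRegularizer X h Gh) {x p : F}
    (hx : x ∈ X) (hp : p ∈ X) : 1 / 2 * ‖p - x‖ ^ 2 ≤ breg h Gh p x := by
  have hsq : HasFDerivAt (fun y : F => 1 / 2 * ‖y‖ ^ 2) (innerSL ℝ x) x :=
    ((hasStrictFDerivAt_norm_sq x).hasFDerivAt.const_mul (1 / 2 : ℝ)).congr_fderiv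
      (by ext v; simp)
  have := (strongConvexOn_iff_convex.mp hreg.strong).add_apply_sub_le hx hp
    ((hreg.grad x).sub hsq)
  simp only [sub_apply, innerSL_apply_apply] at this
  rw [breg, norm_sub_sq_real, inner_sub_right, real_inner_comm]
  rw [inner_sub_right, inner_sub_right, real_inner_self_eq_norm_sq] at this
  linarith

end Bregman

theorem real_inner_le_sq_div_add {F : Type*} [NormedAddCommGroup F] [InnerProductSpace ℝ F]
    (u v : F) {c : ℝ} (hc : 0 < c) :
    ⟪u, v⟫ ≤ ‖u‖ ^ 2 / c + c / 4 * ‖v‖ ^ 2 := by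
  rw [div_add' _ _ _ hc.ne', le_div_iff₀ hc]
  nlinarith [real_inner_le_norm u v, sq_nonneg (‖u‖ - c / 2 * ‖v‖)]

/-- The suboptimality of `p` in the objective minimised by the base state `Z t`. -/
def daEnergy {F : Type*} [NormedAddCommGroup F] [InnerProductSpace ℝ F]
    (h : F → ℝ) (η : ℕ → ℝ) (g Z : ℕ → F) (p : F) (t : ℕ) : ℝ :=
  ⟪∑ s ∈ Ico 1 t, g s, p - Z t⟫ + η t * (h p - h (Z t))

namespace IsOptDA
variable {F : Type*} [NormedAddCommGroup F] [InnerProductSpace ℝ F] {X : Set F}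
  {h : F → ℝ} {Gh : F → F} {η : ℕ → ℝ} {g Z W : ℕ → F} {p : F} {t : ℕ}

theorem apply_base_one_le (hod : IsOptDA X h Gh η g Z W) (hp : p ∈ X) : h (Z 1) ≤ h p := by
  have := hod.base_min 1 le_rfl p hp
  simp only [Ico_self, sum_empty, inner_zero_left, zero_add] at this
  exact le_of_mul_le_mul_left this (hod.eta_pos 1 le_rfl)

theorem daEnergy_nonneg (hod : IsOptDA X h Gh η g Z W) (hp : p ∈ X) (ht : 1 ≤ t) :
    0 ≤ daEnergy h η g Z p t := by
  have := hod.base_min t ht p hp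
  rw [daEnergy, inner_sub_right]
  linarith

theorem base_optimality (hod : IsOptDA X h Gh η g Z W) (hX : Convex ℝ X)
    (hgrad : ∀ x, HasFDerivAt h (innerSL ℝ (Gh x)) x) (ht : 1 ≤ t) (hp : p ∈ X) :
    0 ≤ ⟪∑ s ∈ Ico 1 t, g s, p - Z t⟫ + η t * ⟪Gh (Z t), p - Z t⟫ := by
  have hd := ((innerSL ℝ (∑ s ∈ Ico 1 t, g s)).hasFDerivAt).add ((hgrad (Z t)).const_mul (η t))
  have hmin : IsMinOn (fun q => ⟪∑ s ∈ Ico 1 t, g s, q⟫ + η t * h q) X (Z t) :=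
    fun q hq => hod.base_min t ht q hq
  simpa [sum_inner] using hmin.hasFDerivAt_apply_sub_nonneg hX (hod.base_mem t ht) hp hd

theorem lead_optimality (hod : IsOptDA X h Gh η g Z W) (hX : Convex ℝ X)
    (hgrad : ∀ x, HasFDerivAt h (innerSL ℝ (Gh x)) x) (ht : 1 ≤ t) (hp : p ∈ X) :
    0 ≤ ⟪g (t - 1), p - W t⟫ + η t * ⟪Gh (W t) - Gh (Z t), p - W t⟫ := by
  have hd := ((innerSL ℝ (g (t - 1))).hasFDerivAt).add
    ((hasFDerivAt_breg_left hgrad (Z t) (W t)).const_mul (η t))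
  have hmin : IsMinOn (fun q => ⟪g (t - 1), q⟫ + η t * breg h Gh q (Z t)) X (W t) :=
    fun q hq => hod.lead_min t ht q hq
  simpa [inner_sub_left] using hmin.hasFDerivAt_apply_sub_nonneg hX (hod.lead_mem t ht) hp hd

theorem daEnergy_step (hod : IsOptDA X h Gh η g Z W) (hX : Convex ℝ X)
    (hreg : IsRegularizer X h Gh) (ht : 1 ≤ t) :
    η t / 2 * ‖W t - Z t‖ ^ 2 + η t / 4 * ‖Z (t + 1) - W t‖ ^ 2 + ⟪g t, W t - p⟫
      ≤ daEnergy h η g Z p t - daEnergy h η g Z p (t + 1)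
        + (η (t + 1) - η t) * (h p - h (Z 1)) + ‖g t - g (t - 1)‖ ^ 2 / η t := by
  have hZ := hod.base_mem t ht
  have hW := hod.lead_mem t ht
  have hZ' := hod.base_mem (t + 1) (by omega)
  have hη := hod.eta_pos t ht
  have base := hod.base_optimality hX hreg.grad ht hZ'
  have lead := hod.lead_optimality hX hreg.grad ht hZ'
  have three_point := inner_sub_sub_eq_breg h Gh (Z t) (W t) (Z (t + 1))
  have hWZ := mul_le_mul_of_nonneg_left (hreg.half_sq_norm_le_breg hZ hW) hη.le
  have hZW := mul_le_mul_of_nonneg_left (hreg.half_sq_norm_le_breg hW hZ') hη.le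
  have hrate : (η (t + 1) - η t) * (h p - h (Z (t + 1)))
      ≤ (η (t + 1) - η t) * (h p - h (Z 1)) :=
    mul_le_mul_of_nonneg_left (by linarith [hod.apply_base_one_le hZ'])
      (by linarith [hod.eta_mono t ht])
  have young := real_inner_le_sq_div_add (g t - g (t - 1)) (W t - Z (t + 1)) hη
  rw [norm_sub_rev (W t)] at young
  simp only [daEnergy, sum_Ico_succ_top ht, breg, inner_add_left, inner_sub_left,
    inner_sub_right] at *
  linarith

theorem sum_sq_movement_add_inner_le (hod : IsOptDA X h Gh η g Z W) (hX : Convex ℝ X)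
    (hreg : IsRegularizer X h Gh) (hη : ∀ t, 1 ≤ t → 1 ≤ η t) (hp : p ∈ X) {n : ℕ} (hn : 1 ≤ n) :
    ∑ t ∈ Ico 1 n, ((‖W t - Z t‖ ^ 2 + ‖Z (t + 1) - W t‖ ^ 2) / 4 + ⟪g t, W t - p⟫)
      ≤ η n * (h p - h (Z 1)) + ∑ t ∈ Ico 1 n, ‖g t - g (t - 1)‖ ^ 2 / η t := by
  have telescoped :
      ∑ t ∈ Ico 1 n, ((‖W t - Z t‖ ^ 2 + ‖Z (t + 1) - W t‖ ^ 2) / 4 + ⟪g t, W t - p⟫)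
        + daEnergy h η g Z p n
      ≤ daEnergy h η g Z p 1 + (η n - η 1) * (h p - h (Z 1))
        + ∑ t ∈ Ico 1 n, ‖g t - g (t - 1)‖ ^ 2 / η t := by
    induction n, hn using Nat.le_induction with
    | base => simp
    | succ n hn ih =>
      have step := hod.daEnergy_step (p := p) hX hreg hn
      have hstep : (‖W n - Z n‖ ^ 2 + ‖Z (n + 1) - W n‖ ^ 2) / 4
          ≤ η n / 2 * ‖W n - Z n‖ ^ 2 + η n / 4 * ‖Z (n + 1) - W n‖ ^ 2 := by
        nlinarith [hη n hn, sq_nonneg ‖W n - Z n‖, sq_nonneg ‖Z (n + 1) - W n‖]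
      rw [sum_Ico_succ_top hn, sum_Ico_succ_top hn]
      linarith
  have hstart : daEnergy h η g Z p 1 = η 1 * (h p - h (Z 1)) := by simp [daEnergy]
  linarith [hod.daEnergy_nonneg hp hn]

end IsOptDA

theorem exists_sum_div_sqrt_le_add_mul_sum {a b : ℕ → ℝ} (ha : ∀ t, 0 ≤ a t)
    (hb : ∀ t, 0 ≤ b t) {t₀ : ℕ} (hab : ∀ t, t₀ ≤ t → a t ≤ b t) {ε : ℝ} (hε : 0 < ε) :
    ∃ M, ∀ n, ∑ t ∈ Ico 1 n, a t / √(1 + ∑ s ∈ Ico 1 t, a s)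
      ≤ M + ε * ∑ t ∈ Ico t₀ n, b t := by
  set S : ℕ → ℝ := fun t => ∑ s ∈ Ico 1 t, a s
  have hS : Monotone S := fun m n hmn =>
    sum_le_sum_of_subset_of_nonneg (Ico_subset_Ico_right hmn) fun t _ _ => ha t
  have hdiv : ∀ t, a t / √(1 + S t) ≤ a t := fun t =>
    div_le_self (ha t) (Real.one_le_sqrt.2 (le_add_of_nonneg_right (sum_nonneg fun s _ => ha s)))
  have hb_sum : ∀ n, 0 ≤ ε * ∑ t ∈ Ico t₀ n, b t := fun n =>
    mul_nonneg hε.le (sum_nonneg fun t _ => hb t)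
  -- Either `∑ a` converges, or `√(1 + S t) ≥ ε⁻¹` eventually and then `a t / √(1 + S t) ≤ ε b t`.
  by_cases hbdd : ∃ B, ∀ n, S n ≤ B
  · obtain ⟨B, hB⟩ := hbdd
    exact ⟨B, fun n => ((sum_le_sum fun t _ => hdiv t).trans (hB n)).trans
      (le_add_of_nonneg_right (hb_sum n))⟩
  push Not at hbdd
  have hrate : Tendsto (fun t => √(1 + S t)) atTop atTop :=
    Real.tendsto_sqrt_atTop.comp <| tendsto_atTop_add_const_left _ 1 <|
      tendsto_atTop_atTop_of_monotone hS fun B => (hbdd B).imp fun _ => le_of_lt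
  obtain ⟨T, hT⟩ := eventually_atTop.1
    ((hrate.eventually_ge_atTop ε⁻¹).and (eventually_ge_atTop (max t₀ 1)))
  have hT₀ : max t₀ 1 ≤ T := (hT T le_rfl).2
  refine ⟨S T, fun n => ?_⟩
  rcases le_total n T with hn | hn
  · calc ∑ t ∈ Ico 1 n, a t / √(1 + S t) ≤ S n := sum_le_sum fun t _ => hdiv t
      _ ≤ S T := hS hn
      _ ≤ S T + ε * ∑ t ∈ Ico t₀ n, b t := le_add_of_nonneg_right (hb_sum n)
  have htail : ∀ t ∈ Ico T n, a t / √(1 + S t) ≤ ε * b t := fun t ht => by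
    have htT := (mem_Ico.1 ht).1
    calc a t / √(1 + S t) ≤ b t / √(1 + S t) :=
          div_le_div_of_nonneg_right (hab t (by omega)) (Real.sqrt_nonneg _)
      _ ≤ b t / ε⁻¹ := div_le_div_of_nonneg_left (hb t) (inv_pos.2 hε) (hT t htT).1
      _ = ε * b t := by rw [div_inv_eq_mul, mul_comm]
  rw [← sum_Ico_consecutive _ (by omega : 1 ≤ T) hn]
  gcongr
  · exact sum_le_sum fun t _ => hdiv t
  · rw [mul_sum]
    exact (sum_le_sum htail).trans (sum_le_sum_of_subset_of_nonneg
      (Ico_subset_Ico_left (by omega)) fun t _ _ => mul_nonneg hε.le (hb t))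

theorem sum_sq_norm_sub_range_eq_sum_Ico_one {F : Type*} [SeminormedAddGroup F] (g : ℕ → F)
    (n : ℕ) :
    ∑ t ∈ range n, ‖g t - g (t - 1)‖ ^ 2 = ∑ t ∈ Ico 1 n, ‖g t - g (t - 1)‖ ^ 2 := by
  rcases n.eq_zero_or_pos with rfl | hn
  · simp
  · simp [sum_range_eq_add_Ico _ hn]

section AdaptiveRate
variable {F : Type*} [NormedAddCommGroup F] [InnerProductSpace ℝ F]

theorem one_le_adaEta (g : ℕ → F) (t : ℕ) : 1 ≤ adaEta g t :=
  Real.one_le_sqrt.2 (le_add_of_nonneg_right (sum_nonneg fun _ _ => sq_nonneg _))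

theorem tendsto_adaEta {g : ℕ → F} (hg : Summable fun t => ‖g t - g (t - 1)‖ ^ 2) :
    Tendsto (adaEta g) atTop (𝓝 √(1 + ∑' t, ‖g t - g (t - 1)‖ ^ 2)) := by
  have hsum := hg.hasSum.tendsto_sum_nat
  simp_rw [sum_sq_norm_sub_range_eq_sum_Ico_one] at hsum
  exact (Real.continuous_sqrt.tendsto _).comp (hsum.const_add 1)

end AdaptiveRate

theorem le_of_le_add_mul_sqrt {x α β : ℝ} (hx : 0 ≤ x) (h : x ≤ α + β * √x) :
    x ≤ 2 * α + β ^ 2 := by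
  nlinarith [Real.sq_sqrt hx, sq_nonneg (β - √x)]

theorem sq_norm_sub_le_two_mul_add {F : Type*} [SeminormedAddGroup F] (u v w : F) :
    ‖u - w‖ ^ 2 ≤ 2 * (‖u - v‖ ^ 2 + ‖v - w‖ ^ 2) :=
  (pow_le_pow_left₀ (norm_nonneg _) (norm_sub_le_norm_sub_add_norm_sub u v w) 2).trans add_sq_le

section Game
variable {ι : Type*} [Fintype ι] {E : ι → Type*} [∀ i, NormedAddCommGroup (E i)]

def sumSqMovement (W Z : ∀ i, ℕ → E i) (n : ℕ) : ℝ :=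
  ∑ t ∈ Ico 1 n, ∑ j, (‖W j t - Z j t‖ ^ 2 + ‖Z j (t + 1) - W j t‖ ^ 2)

theorem sumSqMovement_mono (W Z : ∀ i, ℕ → E i) : Monotone (sumSqMovement W Z) :=
  fun _ _ hmn =>
    sum_le_sum_of_subset_of_nonneg (Ico_subset_Ico_right hmn) fun _ _ _ => by positivity

theorem sum_Ico_two_le_sumSqMovement (W Z : ∀ i, ℕ → E i) (n : ℕ) :
    ∑ t ∈ Ico 2 n, ∑ j, (‖W j t - Z j t‖ ^ 2 + ‖Z j t - W j (t - 1)‖ ^ 2)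
      ≤ sumSqMovement W Z n := by
  rcases n with _ | m
  · simp [sumSqMovement]
  have hshift : ∑ t ∈ Ico 2 (m + 1), ∑ j, ‖Z j t - W j (t - 1)‖ ^ 2
      = ∑ t ∈ Ico 1 m, ∑ j, ‖Z j (t + 1) - W j t‖ ^ 2 := by
    rw [← sum_Ico_add' (fun t => ∑ j, ‖Z j t - W j (t - 1)‖ ^ 2) 1 m 1]
    simp
  simp only [sumSqMovement, sum_add_distrib, hshift]
  exact add_le_add
    (sum_le_sum_of_subset_of_nonneg (Ico_subset_Ico_left (by omega)) fun _ _ _ => by positivity)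
    (sum_le_sum_of_subset_of_nonneg (Ico_subset_Ico_right (by omega)) fun _ _ _ => by positivity)

theorem LipschitzWith.sq_norm_sub_profileAt_le {G : Type*} [NormedAddCommGroup G]
    {V : PiLp 2 E → G} {K : NNReal} (hV : LipschitzWith K V) (W Z : ∀ i, ℕ → E i) (s t : ℕ) :
    ‖V (profileAt W t) - V (profileAt W s)‖ ^ 2
      ≤ 2 * K ^ 2 * ∑ j, (‖W j t - Z j t‖ ^ 2 + ‖Z j t - W j s‖ ^ 2) := by
  have hprofile : ‖profileAt W t - profileAt W s‖ ^ 2 = ∑ j, ‖W j t - W j s‖ ^ 2 := by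
    rw [PiLp.norm_sq_eq_of_L2]
    rfl
  calc ‖V (profileAt W t) - V (profileAt W s)‖ ^ 2
      ≤ (K * ‖profileAt W t - profileAt W s‖) ^ 2 :=
        pow_le_pow_left₀ (norm_nonneg _) (hV.norm_sub_le _ _) 2
    _ = K ^ 2 * ∑ j, ‖W j t - W j s‖ ^ 2 := by rw [mul_pow, hprofile]
    _ ≤ K ^ 2 * ∑ j, 2 * (‖W j t - Z j t‖ ^ 2 + ‖Z j t - W j s‖ ^ 2) := by
        gcongr with j
        exact sq_norm_sub_le_two_mul_add _ _ _
    _ = 2 * K ^ 2 * ∑ j, (‖W j t - Z j t‖ ^ 2 + ‖Z j t - W j s‖ ^ 2) := by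
        rw [← mul_sum]; ring

variable [∀ i, InnerProductSpace ℝ (E i)] {X : ∀ i, Set (E i)} {V : ∀ i, PiLp 2 E → E i}
  {h : ∀ i, E i → ℝ} {Gh : ∀ i, E i → E i} {η : ι → ℕ → ℝ} {g Z W : ∀ i, ℕ → E i}

namespace AllOptDA

theorem sq_norm_sub_le (setup : AllOptDA X V h Gh η g Z W) {i : ι} {K : NNReal}
    (hK : LipschitzWith K (V i)) {t : ℕ} (ht : 2 ≤ t) :
    ‖g i t - g i (t - 1)‖ ^ 2
      ≤ 2 * K ^ 2 * ∑ j, (‖W j t - Z j t‖ ^ 2 + ‖Z j t - W j (t - 1)‖ ^ 2) := by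
  rw [setup.feedback i t (by omega), setup.feedback i (t - 1) (by omega)]
  exact hK.sq_norm_sub_profileAt_le W Z (t - 1) t

theorem sum_sq_norm_sub_le (setup : AllOptDA X V h Gh η g Z W) {i : ι} {K : NNReal}
    (hK : LipschitzWith K (V i)) (n : ℕ) :
    ∑ t ∈ Ico 1 n, ‖g i t - g i (t - 1)‖ ^ 2 ≤ ‖g i 1‖ ^ 2 + 2 * K ^ 2 * sumSqMovement W Z n := by
  have hA : 0 ≤ 2 * (K : ℝ) ^ 2 * sumSqMovement W Z n := by unfold sumSqMovement; positivity
  rcases le_or_gt n 1 with hn | hn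
  · simp only [Ico_eq_empty_of_le hn, sum_empty]
    positivity
  rw [sum_eq_sum_Ico_succ_bot hn, Nat.sub_self, setup.g_zero, sub_zero]
  gcongr
  calc ∑ t ∈ Ico 2 n, ‖g i t - g i (t - 1)‖ ^ 2
      ≤ ∑ t ∈ Ico 2 n, 2 * K ^ 2 * ∑ j, (‖W j t - Z j t‖ ^ 2 + ‖Z j t - W j (t - 1)‖ ^ 2) :=
        sum_le_sum fun t ht => setup.sq_norm_sub_le hK (mem_Ico.1 ht).1
    _ ≤ 2 * K ^ 2 * sumSqMovement W Z n := by
        rw [← mul_sum]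
        gcongr
        exact sum_Ico_two_le_sumSqMovement W Z n

theorem eta_le (setup : AllOptDA X V h Gh η g Z W) {i : ι} {K : NNReal}
    (hK : LipschitzWith K (V i)) (n : ℕ) :
    η i n ≤ √(1 + ‖g i 1‖ ^ 2) + 2 * K * √(sumSqMovement W Z n) := by
  have hA : 0 ≤ sumSqMovement W Z n := by unfold sumSqMovement; positivity
  rw [setup.rate, adaEta, Real.sqrt_le_iff]
  refine ⟨by positivity, ?_⟩
  have := setup.sum_sq_norm_sub_le hK n
  nlinarith [Real.sq_sqrt hA, Real.sq_sqrt (by positivity : (0 : ℝ) ≤ 1 + ‖g i 1‖ ^ 2),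
    mul_nonneg (mul_nonneg (Real.sqrt_nonneg (1 + ‖g i 1‖ ^ 2)) K.coe_nonneg)
      (Real.sqrt_nonneg (sumSqMovement W Z n))]

theorem exists_sum_div_eta_le (setup : AllOptDA X V h Gh η g Z W) {i : ι} {K : NNReal}
    (hK : LipschitzWith K (V i)) {δ : ℝ} (hδ : 0 < δ) :
    ∃ M, ∀ n, ∑ t ∈ Ico 1 n, ‖g i t - g i (t - 1)‖ ^ 2 / η i t ≤ M + δ * sumSqMovement W Z n := by
  set ε := δ / (2 * K ^ 2 + 1)
  have hε : 0 < ε := by positivity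
  obtain ⟨M, hM⟩ := exists_sum_div_sqrt_le_add_mul_sum (a := fun t => ‖g i t - g i (t - 1)‖ ^ 2)
    (b := fun t => 2 * K ^ 2 * ∑ j, (‖W j t - Z j t‖ ^ 2 + ‖Z j t - W j (t - 1)‖ ^ 2))
    (fun _ => by positivity) (fun _ => by positivity) (t₀ := 2)
    (fun _ ht => setup.sq_norm_sub_le hK ht) hε
  refine ⟨M, fun n => ?_⟩
  simp only [setup.rate i, adaEta]
  refine (hM n).trans ?_
  gcongr M + ?_
  rw [← mul_sum, ← mul_assoc]
  have hcoef : ε * (2 * K ^ 2) ≤ δ := by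
    rw [div_mul_eq_mul_div, div_le_iff₀ (by positivity)]
    nlinarith
  exact mul_le_mul hcoef (sum_Ico_two_le_sumSqMovement W Z n)
    (sum_nonneg fun _ _ => by positivity) hδ.le

variable [DecidableEq ι] {L : ι → PiLp 2 E → ℝ} {xs : PiLp 2 E}

theorem sum_inner_sub_nonneg (setup : AllOptDA X V h Gh η g Z W) (hvs : VarStable X L V)
    (hxs : IsNashEq X L xs) {t : ℕ} (ht : 1 ≤ t) : 0 ≤ ∑ i, ⟪g i t, W i t - xs i⟫ :=
  calc 0 ≤ ∑ i, ⟪V i (profileAt W t), profileAt W t i - xs i⟫ :=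
        hvs.2 _ (fun j => (setup.run j).lead_mem t ht) xs hxs
    _ = ∑ i, ⟪g i t, W i t - xs i⟫ :=
        sum_congr rfl fun i _ => by rw [setup.feedback i t ht]; rfl

theorem sumSqMovement_div_four_le (setup : AllOptDA X V h Gh η g Z W) (hX : ∀ i, Convex ℝ (X i))
    (hvs : VarStable X L V) (hxs : IsNashEq X L xs) {n : ℕ} (hn : 1 ≤ n) :
    sumSqMovement W Z n / 4 ≤ ∑ i, η i n * (h i (xs i) - h i (Z i 1))
      + ∑ i, ∑ t ∈ Ico 1 n, ‖g i t - g i (t - 1)‖ ^ 2 / η i t := by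
  have hplayer := sum_le_sum fun i (_ : i ∈ univ) =>
    (setup.run i).sum_sq_movement_add_inner_le (hX i) (setup.reg i)
      (fun t _ => setup.rate i t ▸ one_le_adaEta (g i) t) (hxs.1 i) hn
  have hcoupling : 0 ≤ ∑ t ∈ Ico 1 n, ∑ i, ⟪g i t, W i t - xs i⟫ :=
    sum_nonneg fun t ht => setup.sum_inner_sub_nonneg hvs hxs (mem_Ico.1 ht).1
  have hsplit : ∑ i, ∑ t ∈ Ico 1 n,
      ((‖W i t - Z i t‖ ^ 2 + ‖Z i (t + 1) - W i t‖ ^ 2) / 4 + ⟪g i t, W i t - xs i⟫)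
      = sumSqMovement W Z n / 4 + ∑ t ∈ Ico 1 n, ∑ i, ⟪g i t, W i t - xs i⟫ := by
    rw [sum_comm]
    simp only [sumSqMovement, sum_div, add_div, sum_add_distrib]
  rw [hsplit, sum_add_distrib] at hplayer
  linarith

theorem exists_sumSqMovement_le (setup : AllOptDA X V h Gh η g Z W) (hX : ∀ i, Convex ℝ (X i))
    (hV : ∀ i, ∃ K : NNReal, LipschitzWith K (V i)) (hvs : VarStable X L V) :
    ∃ B, ∀ n, sumSqMovement W Z n ≤ B := by
  obtain ⟨xs, hxs⟩ := hvs.1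
  choose K hK using hV
  -- With this `δ` the players' optimism errors together cost at most `A_T / 8`.
  set δ : ℝ := 1 / (8 * (Fintype.card ι + 1))
  have hδ : 0 < δ := by positivity
  have hcard : (Fintype.card ι : ℝ) * δ ≤ 1 / 8 := by
    rw [mul_one_div, div_le_div_iff₀ (by positivity) (by positivity)]
    linarith
  choose M hM using fun i => setup.exists_sum_div_eta_le (hK i) hδ
  set C : ι → ℝ := fun i => h i (xs i) - h i (Z i 1)
  have hC : ∀ i, 0 ≤ C i := fun i => sub_nonneg.2 ((setup.run i).apply_base_one_le (hxs.1 i))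
  set α := ∑ i, (C i * √(1 + ‖g i 1‖ ^ 2) + M i)
  set β := ∑ i, C i * (2 * K i)
  have hA : ∀ n, 0 ≤ sumSqMovement W Z n := fun n => by unfold sumSqMovement; positivity
  have key : ∀ n, 1 ≤ n → sumSqMovement W Z n ≤ 8 * α + 8 * β * √(sumSqMovement W Z n) := by
    intro n hn
    have master := setup.sumSqMovement_div_four_le hX hvs hxs hn
    have heta : ∑ i, η i n * C i
        ≤ ∑ i, (C i * √(1 + ‖g i 1‖ ^ 2) + C i * (2 * K i) * √(sumSqMovement W Z n)) :=
      sum_le_sum fun i _ => by nlinarith [setup.eta_le (hK i) n, hC i]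
    have hregret : ∑ i, ∑ t ∈ Ico 1 n, ‖g i t - g i (t - 1)‖ ^ 2 / η i t
        ≤ ∑ i, (M i + δ * sumSqMovement W Z n) :=
      sum_le_sum fun i _ => hM i n
    simp only [sum_add_distrib, sum_const, card_univ, nsmul_eq_mul, ← sum_mul] at heta hregret
    simp only [α, β, sum_add_distrib]
    nlinarith [hcard, hA n]
  refine ⟨2 * (8 * α) + (8 * β) ^ 2, fun n => (sumSqMovement_mono W Z n.le_succ).trans ?_⟩
  exact le_of_le_add_mul_sqrt (hA _) (key (n + 1) (by omega))

end AllOptDA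

end Game

/-- Lemma 4: in a variationally stable game where all players run OptDA with the adaptive
learning rate, each player's gradient-increment sum is finite and the learning rate
converges to a finite limit. -/
theorem increments_summable_eta_converges
    (X : ∀ i, Set (E i)) (L : ι → PiLp 2 E → ℝ) (V : ∀ i, PiLp 2 E → E i)
    (game : ConvexGame X L V) (hvs : VarStable X L V)
    (h : ∀ i, E i → ℝ) (Gh : ∀ i, E i → E i)
    (η : ∀ i, ℕ → ℝ) (g : ∀ i, ℕ → E i) (Z W : ∀ i, ℕ → E i)
    (setup : AllOptDA X V h Gh η g Z W) :
    ∀ i, (Summable fun t : ℕ => ‖g i t - g i (t - 1)‖ ^ 2) ∧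
      ∃ c : ℝ, Tendsto (fun t : ℕ => η i t) atTop (𝓝 c) := by
  intro i
  obtain ⟨B, hB⟩ := setup.exists_sumSqMovement_le game.convexSet game.lipschitzV hvs
  obtain ⟨K, hK⟩ := game.lipschitzV i
  have hsum : Summable fun t : ℕ => ‖g i t - g i (t - 1)‖ ^ 2 := by
    refine summable_of_sum_range_le (c := ‖g i 1‖ ^ 2 + 2 * K ^ 2 * B)
      (fun _ => sq_nonneg _) fun n => ?_
    rw [sum_sq_norm_sub_range_eq_sum_Ico_one]
    exact (setup.sum_sq_norm_sub_le hK n).trans (by gcongr; exact hB n)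
  exact ⟨hsum, _, funext (setup.rate i) ▸ tendsto_adaEta hsum⟩
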